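/- arXiv:1805.05199 — 7 statements merged into one kernel-verified Lean document; each statement's English description precedes it below -/
import Mathlib

section
/- Let 0 < p < 1 and α, β₁, β₂, β₃ > 0. Let V₁, V₂, V₃ be independent ℕ-valued random variables on a probability space such that P(Vᵢ ≤ x) = (1 − p^{(x+1)^α})^{βᵢ} for all x ∈ ℕ and i = 1,2,3, and set X₁ = max{V₁, V₃} and X₂ = max{V₂, V₃}. Then for all x₁, x₂ ∈ ℕ, the joint cumulative distribution function satisfies P(X₁ ≤ x₁, X₂ ≤ x₂) = (1 − p^{(x₁+1)^α})^{β₁} · (1 − p^{(x₂+1)^α})^{β₂} · (1 − p^{(z+1)^α})^{β₃}, where z = min{x₁, x₂}. -/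
open MeasureTheory ProbabilityTheory

/-- The CDF of the exponentiated discrete Weibull distribution `EDW(α, p, β)`:
`F_EDW(x; α, p, β) = (1 - p^((x+1)^α))^β`. -/
noncomputable def edwCDF (α p β : ℝ) (x : ℕ) : ℝ :=
  (1 - p ^ (((x : ℝ) + 1) ^ α)) ^ β

/-- The PMF of the exponentiated discrete Weibull distribution `EDW(α, p, β)`:
`f_EDW(x; α, p, β) = (1 - p^((x+1)^α))^β - (1 - p^(x^α))^β`. -/
noncomputable def edwPMF (α p β : ℝ) (x : ℕ) : ℝ :=
  (1 - p ^ (((x : ℝ) + 1) ^ α)) ^ β - (1 - p ^ ((x : ℝ) ^ α)) ^ β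

theorem max_le_and_max_le_iff {α : Type*} [LinearOrder α] {a b c x y : α} :
    max a c ≤ x ∧ max b c ≤ y ↔ a ≤ x ∧ b ≤ y ∧ c ≤ min x y := by
  simp only [max_le_iff, le_min_iff]
  tauto

namespace ProbabilityTheory

variable {Ω β : Type*} [MeasurableSpace Ω] {μ : Measure Ω} [MeasurableSpace β] {X Y Z : Ω → β}

theorem iIndepFun.measure_preimage_inter_preimage_inter_preimage
    (h : iIndepFun ![X, Y, Z] μ) {s t u : Set β}
    (hs : MeasurableSet s) (ht : MeasurableSet t) (hu : MeasurableSet u) :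
    μ (X ⁻¹' s ∩ Y ⁻¹' t ∩ Z ⁻¹' u) = μ (X ⁻¹' s) * μ (Y ⁻¹' t) * μ (Z ⁻¹' u) := by
  have hsets : ∀ i ∈ (Finset.univ : Finset (Fin 3)), MeasurableSet (![s, t, u] i) := by
    intro i _
    fin_cases i <;> assumption
  have hinter : ⋂ i ∈ (Finset.univ : Finset (Fin 3)), ![X, Y, Z] i ⁻¹' ![s, t, u] i =
      X ⁻¹' s ∩ Y ⁻¹' t ∩ Z ⁻¹' u := by
    ext ω
    simp [Fin.forall_fin_succ, and_assoc]
  rw [← hinter, h.measure_inter_preimage_eq_mul Finset.univ hsets, Fin.prod_univ_three]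
  rfl

theorem iIndepFun.measure_max_le_and_max_le [LinearOrder β] [TopologicalSpace β]
    [OrderClosedTopology β] [OpensMeasurableSpace β]
    (h : iIndepFun ![X, Y, Z] μ) (x y : β) :
    μ {ω | max (X ω) (Z ω) ≤ x ∧ max (Y ω) (Z ω) ≤ y} =
      μ {ω | X ω ≤ x} * μ {ω | Y ω ≤ y} * μ {ω | Z ω ≤ min x y} := by
  have hevent : {ω | max (X ω) (Z ω) ≤ x ∧ max (Y ω) (Z ω) ≤ y} =
      X ⁻¹' Set.Iic x ∩ Y ⁻¹' Set.Iic y ∩ Z ⁻¹' Set.Iic (min x y) := by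
    ext ω
    simp only [Set.mem_ofPred_eq, max_le_and_max_le_iff, Set.mem_inter_iff, Set.mem_preimage,
      Set.mem_Iic, and_assoc]
  rw [hevent, h.measure_preimage_inter_preimage_inter_preimage measurableSet_Iic
    measurableSet_Iic measurableSet_Iic]
  rfl

end ProbabilityTheory

theorem bdew_joint_cdf_general
    {Ω : Type*} [MeasurableSpace Ω] (μ : Measure Ω)
    (α p β₁ β₂ β₃ : ℝ)
    (V₁ V₂ V₃ : Ω → ℕ)
    (hindep : iIndepFun ![V₁, V₂, V₃] μ)
    (hcdf₁ : ∀ x : ℕ, (μ {ω | V₁ ω ≤ x}).toReal = edwCDF α p β₁ x)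
    (hcdf₂ : ∀ x : ℕ, (μ {ω | V₂ ω ≤ x}).toReal = edwCDF α p β₂ x)
    (hcdf₃ : ∀ x : ℕ, (μ {ω | V₃ ω ≤ x}).toReal = edwCDF α p β₃ x) :
    ∀ x₁ x₂ : ℕ,
      (μ {ω | max (V₁ ω) (V₃ ω) ≤ x₁ ∧ max (V₂ ω) (V₃ ω) ≤ x₂}).toReal =
        edwCDF α p β₁ x₁ * edwCDF α p β₂ x₂ * edwCDF α p β₃ (min x₁ x₂) := by
  intro x₁ x₂
  rw [hindep.measure_max_le_and_max_le, ENNReal.toReal_mul, ENNReal.toReal_mul,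
    hcdf₁, hcdf₂, hcdf₃]

/-- Lemma 1: the joint CDF of the BDEW distribution. -/
theorem bdew_joint_cdf
    {Ω : Type*} [MeasurableSpace Ω] (μ : Measure Ω) [IsProbabilityMeasure μ]
    (α p β₁ β₂ β₃ : ℝ)
    (hp0 : 0 < p) (hp1 : p < 1) (hα : 0 < α)
    (hβ₁ : 0 < β₁) (hβ₂ : 0 < β₂) (hβ₃ : 0 < β₃)
    (V₁ V₂ V₃ : Ω → ℕ)
    (hm₁ : Measurable V₁) (hm₂ : Measurable V₂) (hm₃ : Measurable V₃)
    (hindep : iIndepFun ![V₁, V₂, V₃] μ)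
    (hcdf₁ : ∀ x : ℕ, (μ {ω | V₁ ω ≤ x}).toReal = edwCDF α p β₁ x)
    (hcdf₂ : ∀ x : ℕ, (μ {ω | V₂ ω ≤ x}).toReal = edwCDF α p β₂ x)
    (hcdf₃ : ∀ x : ℕ, (μ {ω | V₃ ω ≤ x}).toReal = edwCDF α p β₃ x) :
    ∀ x₁ x₂ : ℕ,
      (μ {ω | max (V₁ ω) (V₃ ω) ≤ x₁ ∧ max (V₂ ω) (V₃ ω) ≤ x₂}).toReal =
        edwCDF α p β₁ x₁ * edwCDF α p β₂ x₂ * edwCDF α p β₃ (min x₁ x₂) :=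
  bdew_joint_cdf_general μ α p β₁ β₂ β₃ V₁ V₂ V₃ hindep hcdf₁ hcdf₂ hcdf₃
end

section
/- Let 0 < p < 1 and α, β₁, β₂, β₃ > 0. Let V₁, V₂, V₃ be independent ℕ-valued random variables with P(Vᵢ ≤ x) = (1 − p^{(x+1)^α})^{βᵢ} for all x ∈ ℕ, and set X₁ = max{V₁, V₃}, X₂ = max{V₂, V₃}. Then for all x₁, x₂ ∈ ℕ with x₁ < x₂, the joint probability mass function satisfies P(X₁ = x₁, X₂ = x₂) = [(1 − p^{(x₁+1)^α})^{β₁+β₃} − (1 − p^{x₁^α})^{β₁+β₃}] · [(1 − p^{(x₂+1)^α})^{β₂} − (1 − p^{x₂^α})^{β₂}]. -/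
/-! Since `V₃ ≤ max V₁ V₃ = x₁ < x₂`, the event forces `max V₂ V₃ = V₂`, so it is
`{max V₁ V₃ = x₁} ∩ {V₂ = x₂}`, and `max V₁ V₃` is independent of `V₂`. The CDF of `max V₁ V₃` is
the product of the CDFs of `V₁` and `V₃`, and `(1 - q)^β₁ (1 - q)^β₃ = (1 - q)^(β₁ + β₃)`, so
`max V₁ V₃ ~ EDW(α, p, β₁ + β₃)`. -/

open MeasureTheory ProbabilityTheory

/-- `P(V < x)` for `V ~ EDW(α, p, β)`. -/
noncomputable def edwStrictCDF (α p β : ℝ) (x : ℕ) : ℝ :=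
  (1 - p ^ ((x : ℝ) ^ α)) ^ β

lemma edwCDF_eq_edwStrictCDF_succ (α p β : ℝ) (x : ℕ) :
    edwCDF α p β x = edwStrictCDF α p β (x + 1) := by
  simp only [edwCDF, edwStrictCDF, Nat.cast_succ]

lemma edwPMF_eq_edwStrictCDF_sub (α p β : ℝ) (x : ℕ) :
    edwPMF α p β x = edwStrictCDF α p β (x + 1) - edwStrictCDF α p β x := by
  simp only [edwPMF, edwStrictCDF, Nat.cast_succ]

lemma edwStrictCDF_zero {α β : ℝ} (hα : α ≠ 0) (hβ : β ≠ 0) (p : ℝ) :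
    edwStrictCDF α p β 0 = 0 := by
  simp [edwStrictCDF, Real.zero_rpow hα, Real.zero_rpow hβ]

lemma edwCDF_add {p β₁ β₂ : ℝ} (hp0 : 0 ≤ p) (hp1 : p ≤ 1) (hβ : β₁ + β₂ ≠ 0) (α : ℝ) (x : ℕ) :
    edwCDF α p (β₁ + β₂) x = edwCDF α p β₁ x * edwCDF α p β₂ x := by
  have hle : p ^ (((x : ℝ) + 1) ^ α) ≤ 1 :=
    Real.rpow_le_one hp0 hp1 (Real.rpow_nonneg (by positivity) α)
  exact Real.rpow_add' (sub_nonneg.2 hle) hβ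

namespace ProbabilityTheory

variable {Ω : Type*} [MeasurableSpace Ω] {μ : Measure Ω} {V W : Ω → ℕ}

lemma measureReal_lt_of_measureReal_le {G : ℕ → ℝ} (hG : G 0 = 0)
    (hV : ∀ x, μ.real {ω | V ω ≤ x} = G (x + 1)) (x : ℕ) :
    μ.real {ω | V ω < x} = G x := by
  cases x with
  | zero => simp [hG]
  | succ x => simpa [Nat.lt_succ_iff] using hV x

lemma measureReal_eq_of_measureReal_le [IsFiniteMeasure μ] (hm : Measurable V)
    {G : ℕ → ℝ} (hG : G 0 = 0) (hV : ∀ x, μ.real {ω | V ω ≤ x} = G (x + 1)) (x : ℕ) :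
    μ.real {ω | V ω = x} = G (x + 1) - G x := by
  have hsplit : {ω | V ω = x} = {ω | V ω ≤ x} \ {ω | V ω < x} := by
    ext ω; simp only [Set.mem_ofPred_eq, Set.mem_sdiff, not_lt]; omega
  have hsub : {ω | V ω < x} ⊆ {ω | V ω ≤ x} := Set.ofPred_subset_ofPred.2 fun _ ↦ le_of_lt
  rw [hsplit, measureReal_sdiff hsub (hm measurableSet_Iio), hV,
    measureReal_lt_of_measureReal_le hG hV]

lemma measureReal_eq_edwPMF [IsFiniteMeasure μ] (hm : Measurable V) {α p β : ℝ}
    (hα : α ≠ 0) (hβ : β ≠ 0) (hV : ∀ x, μ.real {ω | V ω ≤ x} = edwCDF α p β x) (x : ℕ) :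
    μ.real {ω | V ω = x} = edwPMF α p β x := by
  rw [edwPMF_eq_edwStrictCDF_sub]
  exact measureReal_eq_of_measureReal_le hm (edwStrictCDF_zero hα hβ p)
    (fun x ↦ (hV x).trans (edwCDF_eq_edwStrictCDF_succ α p β x)) x

lemma IndepFun.measureReal_inter_preimage_eq_mul {β γ : Type*} [MeasurableSpace β]
    [MeasurableSpace γ] {f : Ω → β} {g : Ω → γ} (h : IndepFun f g μ) {s : Set β} {t : Set γ}
    (hs : MeasurableSet s) (ht : MeasurableSet t) :
    μ.real (f ⁻¹' s ∩ g ⁻¹' t) = μ.real (f ⁻¹' s) * μ.real (g ⁻¹' t) := by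
  simp only [measureReal_def, h.measure_inter_preimage_eq_mul s t hs ht, ENNReal.toReal_mul]

lemma IndepFun.measureReal_max_le (h : IndepFun V W μ) (x : ℕ) :
    μ.real {ω | max (V ω) (W ω) ≤ x} = μ.real {ω | V ω ≤ x} * μ.real {ω | W ω ≤ x} := by
  have hevent : {ω | max (V ω) (W ω) ≤ x} = V ⁻¹' Set.Iic x ∩ W ⁻¹' Set.Iic x := by
    ext ω; exact max_le_iff (a := V ω)
  rw [hevent]
  exact h.measureReal_inter_preimage_eq_mul measurableSet_Iic measurableSet_Iic

end ProbabilityTheory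

/-- The joint PMF of the BDEW distribution in the case `x₁ < x₂`. -/
theorem bdew_joint_pmf_lt
    {Ω : Type*} [MeasurableSpace Ω] (μ : Measure Ω) [IsProbabilityMeasure μ]
    (α p β₁ β₂ β₃ : ℝ)
    (hp0 : 0 < p) (hp1 : p < 1) (hα : 0 < α)
    (hβ₁ : 0 < β₁) (hβ₂ : 0 < β₂) (hβ₃ : 0 < β₃)
    (V₁ V₂ V₃ : Ω → ℕ)
    (hm₁ : Measurable V₁) (hm₂ : Measurable V₂) (hm₃ : Measurable V₃)
    (hindep : iIndepFun ![V₁, V₂, V₃] μ)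
    (hcdf₁ : ∀ x : ℕ, (μ {ω | V₁ ω ≤ x}).toReal = edwCDF α p β₁ x)
    (hcdf₂ : ∀ x : ℕ, (μ {ω | V₂ ω ≤ x}).toReal = edwCDF α p β₂ x)
    (hcdf₃ : ∀ x : ℕ, (μ {ω | V₃ ω ≤ x}).toReal = edwCDF α p β₃ x) :
    ∀ x₁ x₂ : ℕ, x₁ < x₂ →
      (μ {ω | max (V₁ ω) (V₃ ω) = x₁ ∧ max (V₂ ω) (V₃ ω) = x₂}).toReal =
        edwPMF α p (β₁ + β₃) x₁ * edwPMF α p β₂ x₂ := by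
  intro x₁ x₂ hx
  have hmeas : ∀ i, Measurable (![V₁, V₂, V₃] i) := by
    intro i; fin_cases i <;> assumption
  have hV₁V₃ : IndepFun V₁ V₃ μ := hindep.indepFun (i := 0) (j := 2) (by decide)
  have hX₁V₂ : IndepFun (fun ω ↦ max (V₁ ω) (V₃ ω)) V₂ μ :=
    (hindep.indepFun_prodMk hmeas 0 2 1 (by decide) (by decide)).comp
      (measurable_fst.max measurable_snd) measurable_id
  have hcdfX₁ (x : ℕ) : μ.real {ω | max (V₁ ω) (V₃ ω) ≤ x} = edwCDF α p (β₁ + β₃) x := by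
    rw [hV₁V₃.measureReal_max_le, edwCDF_add hp0.le hp1.le (by positivity)]
    exact congrArg₂ (· * ·) (hcdf₁ x) (hcdf₃ x)
  have hevent : {ω | max (V₁ ω) (V₃ ω) = x₁ ∧ max (V₂ ω) (V₃ ω) = x₂} =
      (fun ω ↦ max (V₁ ω) (V₃ ω)) ⁻¹' {x₁} ∩ V₂ ⁻¹' {x₂} := by
    ext ω
    simp only [Set.mem_ofPred_eq, Set.mem_inter_iff, Set.mem_preimage, Set.mem_singleton_iff]
    omega
  rw [← measureReal_def, hevent, hX₁V₂.measureReal_inter_preimage_eq_mul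
    (measurableSet_singleton _) (measurableSet_singleton _)]
  exact congrArg₂ (· * ·)
    (measureReal_eq_edwPMF (hm₁.max hm₃) hα.ne' (by positivity) hcdfX₁ x₁)
    (measureReal_eq_edwPMF hm₂ hα.ne' hβ₂.ne' hcdf₂ x₂)
end

section
/- Let 0 < p < 1 and α, β₁, β₂, β₃ > 0. Let V₁, V₂, V₃ be independent ℕ-valued random variables with P(Vᵢ ≤ x) = (1 − p^{(x+1)^α})^{βᵢ} for all x ∈ ℕ, and set X₁ = max{V₁, V₃}, X₂ = max{V₂, V₃}. Then for all x₁, x₂ ∈ ℕ with x₂ < x₁, the joint probability mass function satisfies P(X₁ = x₁, X₂ = x₂) = [(1 − p^{(x₁+1)^α})^{β₁} − (1 − p^{x₁^α})^{β₁}] · [(1 − p^{(x₂+1)^α})^{β₂+β₃} − (1 − p^{x₂^α})^{β₂+β₃}]. -/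
/-!
Since `V₃ ≤ max V₂ V₃ = x₂ < x₁`, the event `{X₁ = x₁, X₂ = x₂}` is `{V₁ = x₁} ∩ {max V₂ V₃ = x₂}`.
Now `V₁` is independent of `max V₂ V₃`, whose CDF is `F_EDW(·; α, p, β₂) F_EDW(·; α, p, β₃) =
F_EDW(·; α, p, β₂ + β₃)`, and each factor is a difference of consecutive CDF values.
-/

open MeasureTheory ProbabilityTheory

theorem max_eq_and_max_eq_iff_of_lt {α : Type*} [LinearOrder α] {a b c x y : α} (hyx : y < x) :
    max a c = x ∧ max b c = y ↔ a = x ∧ max b c = y := by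
  constructor
  · rintro ⟨hac, hbc⟩
    have hc : c < x := (le_max_right b c).trans_lt (hbc ▸ hyx)
    rcases max_eq_iff.mp hac with ⟨hax, -⟩ | ⟨hcx, -⟩
    · exact ⟨hax, hbc⟩
    · exact absurd hcx hc.ne
  · rintro ⟨rfl, hbc⟩
    exact ⟨max_eq_left ((le_max_right b c).trans (hbc ▸ hyx.le)), hbc⟩

section

variable {Ω : Type*} [MeasurableSpace Ω] {μ : Measure Ω} {α p : ℝ}

theorem toReal_measure_eq_succ_eq_sub [IsFiniteMeasure μ] {V : Ω → ℕ} (hV : Measurable V)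
    (x : ℕ) : (μ {ω | V ω = x + 1}).toReal =
      (μ {ω | V ω ≤ x + 1}).toReal - (μ {ω | V ω ≤ x}).toReal := by
  have hsub : {ω | V ω ≤ x} ⊆ {ω | V ω ≤ x + 1} := fun ω hω => Nat.le_succ_of_le hω
  have hdiff : {ω | V ω = x + 1} = {ω | V ω ≤ x + 1} \ {ω | V ω ≤ x} := by
    ext ω
    simp only [Set.mem_sdiff, Set.mem_ofPred_eq]
    omega
  rw [hdiff]
  exact measureReal_sdiff hsub (hV measurableSet_Iic)

theorem ProbabilityTheory.IndepFun.measure_max_le_eq_mul {V W : Ω → ℕ} (h : IndepFun V W μ)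
    (x : ℕ) : μ {ω | max (V ω) (W ω) ≤ x} = μ {ω | V ω ≤ x} * μ {ω | W ω ≤ x} := by
  simp only [max_le_iff, Set.ofPred_and]
  exact h.measure_inter_preimage_eq_mul _ _ measurableSet_Iic measurableSet_Iic

theorem ProbabilityTheory.IndepFun.measure_eq_and_eq {V W : Ω → ℕ} (h : IndepFun V W μ) (x y : ℕ) :
    μ {ω | V ω = x ∧ W ω = y} = μ {ω | V ω = x} * μ {ω | W ω = y} :=
  h.measure_inter_preimage_eq_mul _ _ (measurableSet_singleton x) (measurableSet_singleton y)

theorem edwCDF_mul_edwCDF (hp0 : 0 ≤ p) (hp1 : p < 1) (β β' : ℝ) (x : ℕ) :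
    edwCDF α p β x * edwCDF α p β' x = edwCDF α p (β + β') x := by
  have hpow : p ^ (((x : ℝ) + 1) ^ α) < 1 :=
    Real.rpow_lt_one hp0 hp1 (Real.rpow_pos_of_pos (by positivity) α)
  exact (Real.rpow_add (by linarith) β β').symm

theorem edwPMF_succ (β : ℝ) (x : ℕ) :
    edwPMF α p β (x + 1) = edwCDF α p β (x + 1) - edwCDF α p β x := by
  simp [edwPMF, edwCDF]

theorem edwPMF_zero (hα : α ≠ 0) {β : ℝ} (hβ : β ≠ 0) : edwPMF α p β 0 = edwCDF α p β 0 := by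
  simp [edwPMF, edwCDF, Real.zero_rpow hα, Real.zero_rpow hβ]

theorem toReal_measure_eq_edwPMF [IsFiniteMeasure μ] (hα : α ≠ 0) {β : ℝ} (hβ : β ≠ 0)
    {V : Ω → ℕ} (hV : Measurable V)
    (hcdf : ∀ x : ℕ, (μ {ω | V ω ≤ x}).toReal = edwCDF α p β x) (x : ℕ) :
    (μ {ω | V ω = x}).toReal = edwPMF α p β x := by
  cases x with
  | zero => simpa [edwPMF_zero hα hβ] using hcdf 0
  | succ x => rw [toReal_measure_eq_succ_eq_sub hV, hcdf, hcdf, edwPMF_succ]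

end

/-- The joint PMF of the BDEW distribution in the case `x₂ < x₁`. -/
theorem bdew_joint_pmf_gt
    {Ω : Type*} [MeasurableSpace Ω] (μ : Measure Ω) [IsProbabilityMeasure μ]
    (α p β₁ β₂ β₃ : ℝ)
    (hp0 : 0 < p) (hp1 : p < 1) (hα : 0 < α)
    (hβ₁ : 0 < β₁) (hβ₂ : 0 < β₂) (hβ₃ : 0 < β₃)
    (V₁ V₂ V₃ : Ω → ℕ)
    (hm₁ : Measurable V₁) (hm₂ : Measurable V₂) (hm₃ : Measurable V₃)
    (hindep : iIndepFun ![V₁, V₂, V₃] μ)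
    (hcdf₁ : ∀ x : ℕ, (μ {ω | V₁ ω ≤ x}).toReal = edwCDF α p β₁ x)
    (hcdf₂ : ∀ x : ℕ, (μ {ω | V₂ ω ≤ x}).toReal = edwCDF α p β₂ x)
    (hcdf₃ : ∀ x : ℕ, (μ {ω | V₃ ω ≤ x}).toReal = edwCDF α p β₃ x) :
    ∀ x₁ x₂ : ℕ, x₂ < x₁ →
      (μ {ω | max (V₁ ω) (V₃ ω) = x₁ ∧ max (V₂ ω) (V₃ ω) = x₂}).toReal =
        edwPMF α p β₁ x₁ * edwPMF α p (β₂ + β₃) x₂ := by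
  intro x₁ x₂ hlt
  have hmeas : ∀ i, Measurable (![V₁, V₂, V₃] i) := fun i => by fin_cases i <;> assumption
  have hmax : Measurable fun ω => max (V₂ ω) (V₃ ω) := hm₂.max hm₃
  have hindep_max : IndepFun V₁ (fun ω => max (V₂ ω) (V₃ ω)) μ :=
    ((hindep.indepFun_prodMk hmeas 1 2 0 (by decide) (by decide)).comp
      (measurable_fst.max measurable_snd) measurable_id).symm
  have hcdf_max : ∀ x : ℕ,
      (μ {ω | max (V₂ ω) (V₃ ω) ≤ x}).toReal = edwCDF α p (β₂ + β₃) x := by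
    intro x
    have h₂₃ : IndepFun V₂ V₃ μ := hindep.indepFun (by decide : (1 : Fin 3) ≠ 2)
    rw [h₂₃.measure_max_le_eq_mul, ENNReal.toReal_mul, hcdf₂, hcdf₃,
      edwCDF_mul_edwCDF hp0.le hp1]
  simp only [max_eq_and_max_eq_iff_of_lt hlt]
  rw [hindep_max.measure_eq_and_eq, ENNReal.toReal_mul,
    toReal_measure_eq_edwPMF hα.ne' hβ₁.ne' hm₁ hcdf₁,
    toReal_measure_eq_edwPMF hα.ne' (by positivity) hmax hcdf_max]
end

section
/- Let 0 < p < 1 and α, β₁, β₂, β₃ > 0. Let V₁, V₂, V₃ be independent ℕ-valued random variables with P(Vᵢ ≤ x) = (1 − p^{(x+1)^α})^{βᵢ} for all x ∈ ℕ, and set X₁ = max{V₁, V₃}, X₂ = max{V₂, V₃}. Then for all x ∈ ℕ, P(X₁ = x, X₂ = x) = (1 − p^{(x+1)^α})^{β₁} · [(1 − p^{(x+1)^α})^{β₂+β₃} − (1 − p^{x^α})^{β₂+β₃}] − (1 − p^{x^α})^{β₁+β₃} · [(1 − p^{(x+1)^α})^{β₂} − (1 − p^{x^α})^{β₂}]. 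-/
/-!
Write `X₁ = max V₁ V₃` and `X₂ = max V₂ V₃`. For a lower set `s`, `max a b ∈ s ↔ a ∈ s ∧ b ∈ s`,
so for `s, t ∈ {Iic x, Iio x}` independence factors `P(X₁ ∈ s, X₂ ∈ t)` as
`P(V₁ ∈ s) P(V₂ ∈ t) P(V₃ ∈ s ∩ t)`. The diagonal mass `P(X₁ = x, X₂ = x)` is the
two-dimensional inclusion–exclusion of four such events, and `P(Vᵢ < x) = (1 - p^(x^α))^βᵢ`
holds also at `x = 0`, where both sides vanish because `0^α = 0` and `0^βᵢ = 0`.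
-/

open MeasureTheory ProbabilityTheory

open Set

theorem IsLowerSet.max_mem_iff {β : Type*} [LinearOrder β] {s : Set β} (hs : IsLowerSet s)
    {a b : β} : max a b ∈ s ↔ a ∈ s ∧ b ∈ s :=
  ⟨fun h => ⟨hs (le_max_left a b) h, hs (le_max_right a b) h⟩,
    fun ⟨ha, hb⟩ => by rcases max_choice a b with h | h <;> rwa [h]⟩

section

variable {Ω : Type*} [MeasurableSpace Ω] {μ : Measure Ω}

theorem ProbabilityTheory.iIndepFun.measure_preimage_inter_preimage_inter_preimage_s3
    {β : Type*} [MeasurableSpace β] {X Y Z : Ω → β} (h : iIndepFun ![X, Y, Z] μ)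
    {s t u : Set β} (hs : MeasurableSet s) (ht : MeasurableSet t) (hu : MeasurableSet u) :
    μ (X ⁻¹' s ∩ Y ⁻¹' t ∩ Z ⁻¹' u) = μ (X ⁻¹' s) * μ (Y ⁻¹' t) * μ (Z ⁻¹' u) := by
  have := h.measure_inter_preimage_eq_mul Finset.univ (sets := ![s, t, u])
    (by intro i _; fin_cases i <;> assumption)
  have hI : ⋂ i ∈ Finset.univ, ![X, Y, Z] i ⁻¹' ![s, t, u] i = X ⁻¹' s ∩ Y ⁻¹' t ∩ Z ⁻¹' u := by
    ext ω
    simp [Fin.forall_fin_succ, and_assoc]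
  rwa [hI, Fin.prod_univ_three] at this

theorem measureReal_eq_and_eq {β : Type*} [LinearOrder β] [MeasurableSpace β]
    [TopologicalSpace β] [OrderClosedTopology β] [OpensMeasurableSpace β] [IsFiniteMeasure μ]
    {X Y : Ω → β} (hX : Measurable X) (hY : Measurable Y) (x y : β) :
    μ.real {ω | X ω = x ∧ Y ω = y} =
      μ.real {ω | X ω ∈ Iic x ∧ Y ω ∈ Iic y} - μ.real {ω | X ω ∈ Iio x ∧ Y ω ∈ Iic y}
        - μ.real {ω | X ω ∈ Iic x ∧ Y ω ∈ Iio y} + μ.real {ω | X ω ∈ Iio x ∧ Y ω ∈ Iio y} := by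
  set B := {ω | X ω ∈ Iio x ∧ Y ω ∈ Iic y}
  set C := {ω | X ω ∈ Iic x ∧ Y ω ∈ Iio y}
  have hB : MeasurableSet B := (hX measurableSet_Iio).inter (hY measurableSet_Iic)
  have hC : MeasurableSet C := (hX measurableSet_Iic).inter (hY measurableSet_Iio)
  have hdiag : {ω | X ω = x ∧ Y ω = y} = {ω | X ω ∈ Iic x ∧ Y ω ∈ Iic y} \ (B ∪ C) := by
    ext ω
    simp only [B, C, mem_ofPred_eq, mem_sdiff, mem_union, mem_Iic, mem_Iio]
    grind
  have hsub : B ∪ C ⊆ {ω | X ω ∈ Iic x ∧ Y ω ∈ Iic y} := by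
    rintro ω (⟨h₁, h₂⟩ | ⟨h₁, h₂⟩)
    exacts [⟨le_of_lt h₁, h₂⟩, ⟨h₁, le_of_lt h₂⟩]
  have hinter : B ∩ C = {ω | X ω ∈ Iio x ∧ Y ω ∈ Iio y} := by
    ext ω
    simp only [B, C, mem_ofPred_eq, mem_inter_iff, mem_Iic, mem_Iio]
    grind
  rw [hdiag, measureReal_sdiff hsub (hB.union hC), ← hinter]
  linarith [measureReal_union_add_inter (μ := μ) (s := B) hC]

theorem measureReal_max_mem_and_max_mem {β : Type*} [LinearOrder β] [MeasurableSpace β]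
    {V₁ V₂ V₃ : Ω → β} (h : iIndepFun ![V₁, V₂, V₃] μ) {s t : Set β}
    (hs : IsLowerSet s) (ht : IsLowerSet t) (hsm : MeasurableSet s) (htm : MeasurableSet t) :
    μ.real {ω | max (V₁ ω) (V₃ ω) ∈ s ∧ max (V₂ ω) (V₃ ω) ∈ t} =
      μ.real (V₁ ⁻¹' s) * μ.real (V₂ ⁻¹' t) * μ.real (V₃ ⁻¹' (s ∩ t)) := by
  have hevent : {ω | max (V₁ ω) (V₃ ω) ∈ s ∧ max (V₂ ω) (V₃ ω) ∈ t} =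
      V₁ ⁻¹' s ∩ V₂ ⁻¹' t ∩ V₃ ⁻¹' (s ∩ t) := by
    ext ω
    simp only [mem_ofPred_eq, hs.max_mem_iff, ht.max_mem_iff, mem_inter_iff, mem_preimage]
    tauto
  simp only [measureReal_def, hevent,
    h.measure_preimage_inter_preimage_inter_preimage_s3 hsm htm (hsm.inter htm), ENNReal.toReal_mul]

theorem measureReal_preimage_Iic_Iio_of_edwCDF {α p β : ℝ} (hα : 0 < α) (hβ : 0 < β)
    {V : Ω → ℕ} (hcdf : ∀ x : ℕ, (μ {ω | V ω ≤ x}).toReal = edwCDF α p β x) (x : ℕ) :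
    μ.real (V ⁻¹' Iic x) = (1 - p ^ (((x : ℝ) + 1) ^ α)) ^ β ∧
      μ.real (V ⁻¹' Iio x) = (1 - p ^ ((x : ℝ) ^ α)) ^ β := by
  refine ⟨hcdf x, ?_⟩
  cases x with
  | zero => simp [Real.zero_rpow hα.ne', Real.zero_rpow hβ.ne']
  | succ n =>
    have hIio : V ⁻¹' Iio (n + 1) = {ω | V ω ≤ n} := by
      ext ω
      simp
    rw [hIio, measureReal_def, hcdf n, edwCDF]
    push_cast
    rfl

end

/-- The joint PMF of the BDEW distribution on the diagonal `x₁ = x₂ = x`. -/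
theorem bdew_joint_pmf_diag
    {Ω : Type*} [MeasurableSpace Ω] (μ : Measure Ω) [IsProbabilityMeasure μ]
    (α p β₁ β₂ β₃ : ℝ)
    (hp0 : 0 < p) (hp1 : p < 1) (hα : 0 < α)
    (hβ₁ : 0 < β₁) (hβ₂ : 0 < β₂) (hβ₃ : 0 < β₃)
    (V₁ V₂ V₃ : Ω → ℕ)
    (hm₁ : Measurable V₁) (hm₂ : Measurable V₂) (hm₃ : Measurable V₃)
    (hindep : iIndepFun ![V₁, V₂, V₃] μ)
    (hcdf₁ : ∀ x : ℕ, (μ {ω | V₁ ω ≤ x}).toReal = edwCDF α p β₁ x)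
    (hcdf₂ : ∀ x : ℕ, (μ {ω | V₂ ω ≤ x}).toReal = edwCDF α p β₂ x)
    (hcdf₃ : ∀ x : ℕ, (μ {ω | V₃ ω ≤ x}).toReal = edwCDF α p β₃ x) :
    ∀ x : ℕ,
      (μ {ω | max (V₁ ω) (V₃ ω) = x ∧ max (V₂ ω) (V₃ ω) = x}).toReal =
        (1 - p ^ (((x : ℝ) + 1) ^ α)) ^ β₁ * edwPMF α p (β₂ + β₃) x -
          (1 - p ^ ((x : ℝ) ^ α)) ^ (β₁ + β₃) * edwPMF α p β₂ x := by
  intro x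
  obtain ⟨hF₁, hG₁⟩ := measureReal_preimage_Iic_Iio_of_edwCDF hα hβ₁ hcdf₁ x
  obtain ⟨hF₂, hG₂⟩ := measureReal_preimage_Iic_Iio_of_edwCDF hα hβ₂ hcdf₂ x
  obtain ⟨hF₃, hG₃⟩ := measureReal_preimage_Iic_Iio_of_edwCDF hα hβ₃ hcdf₃ x
  have hu : 0 ≤ 1 - p ^ (((x : ℝ) + 1) ^ α) :=
    sub_nonneg.2 (Real.rpow_le_one hp0.le hp1.le (by positivity))
  have hv : 0 ≤ 1 - p ^ ((x : ℝ) ^ α) :=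
    sub_nonneg.2 (Real.rpow_le_one hp0.le hp1.le (by positivity))
  have hIio_inter_Iic : Iio x ∩ Iic x = Iio x := inter_eq_left.2 Iio_subset_Iic_self
  have hIic_inter_Iio : Iic x ∩ Iio x = Iio x := inter_eq_right.2 Iio_subset_Iic_self
  rw [← measureReal_def, measureReal_eq_and_eq (hm₁.max hm₃) (hm₂.max hm₃)]
  simp only [measureReal_max_mem_and_max_mem hindep, isLowerSet_Iic, isLowerSet_Iio,
    measurableSet_Iic, measurableSet_Iio, inter_self, hIio_inter_Iic, hIic_inter_Iio,
    hF₁, hF₂, hF₃, hG₁, hG₂, hG₃]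
  rw [edwPMF, edwPMF, Real.rpow_add' hu (by positivity), Real.rpow_add' hv (by positivity),
    Real.rpow_add' hv (by positivity)]
  ring
end

section
/- Let 0 < p < 1 and α, β₁, β₂, β₃ > 0. Let V₁, V₂, V₃ be independent ℕ-valued random variables with P(Vᵢ ≤ x) = (1 − p^{(x+1)^α})^{βᵢ} for all x ∈ ℕ, and set X₁ = max{V₁, V₃}, X₂ = max{V₂, V₃}. Then for all real u, v with 0 ≤ u < 1 and 0 ≤ v < 1, the joint probability generating function satisfies E[u^{X₁} v^{X₂}] = Σ_{i=0}^∞ Σ_{j=i+1}^∞ f_EDW(i; α, p, β₁+β₃) f_EDW(j; α, p, β₂) u^i v^j + Σ_{j=0}^∞ Σ_{i=j+1}^∞ f_EDW(i; α, p, β₁) f_EDW(j; α, p, β₂+β₃) u^i v^j + Σ_{i=0}^∞ [(1 − p^{(i+1)^α})^{β₁} f_EDW(i; α, p, β₂+β₃) − (1 − p^{i^α})^{β₁+β₃} f_EDW(i; α, p, β₂)] u^i v^i, where f_EDW(x; α, p, β) = (1 − p^{(x+1)^α})^β − (1 − p^{x^α})^β. -/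
open MeasureTheory ProbabilityTheory

/-!
Write `G_β(x) = (1 - p^(x^α))^β = P(V < x)` for `V ~ EDW(α, p, β)`; then `G_{β+γ} = G_β G_γ`, and
`G_β(0) = 0`. By independence, `P(X₁ < a, X₂ < b) = G_{β₁}(a) G_{β₂}(b) G_{β₃}(min a b)`, and the
point masses of `(X₁, X₂)` are the rectangle differences of this strict joint CDF. Off the diagonal
the `min` picks the same coordinate at all four corners of the rectangle, so the point mass factors
into two EDW masses; on the diagonal it does not, which produces the third sum. The generating
function is the sum of the point masses against `u^i v^j`, split into the parts below, above and on
the diagonal.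
-/

open Set

noncomputable def edwCDFLt (α p β : ℝ) (x : ℕ) : ℝ :=
  (1 - p ^ ((x : ℝ) ^ α)) ^ β

section EDW

variable {α p β γ : ℝ}

theorem edwCDF_eq_edwCDFLt_add_one (x : ℕ) : edwCDF α p β x = edwCDFLt α p β (x + 1) := by
  simp [edwCDF, edwCDFLt]

theorem edwPMF_eq_sub (x : ℕ) :
    edwPMF α p β x = edwCDFLt α p β (x + 1) - edwCDFLt α p β x := by
  simp [edwPMF, edwCDFLt]

theorem edwCDFLt_zero (hα : α ≠ 0) (hβ : β ≠ 0) : edwCDFLt α p β 0 = 0 := by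
  simp [edwCDFLt, Real.zero_rpow hα, Real.zero_rpow hβ]

theorem edwCDFLt_add (hp0 : 0 ≤ p) (hp1 : p ≤ 1) (hβγ : β + γ ≠ 0) (x : ℕ) :
    edwCDFLt α p (β + γ) x = edwCDFLt α p β x * edwCDFLt α p γ x := by
  have hq : p ^ ((x : ℝ) ^ α) ≤ 1 := Real.rpow_le_one hp0 hp1 (by positivity)
  exact Real.rpow_add' (by linarith) hβγ

theorem measureReal_lt_eq_edwCDFLt {Ω : Type*} [MeasurableSpace Ω] {μ : Measure Ω}
    (hα : α ≠ 0) (hβ : β ≠ 0) {V : Ω → ℕ}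
    (hcdf : ∀ x : ℕ, (μ {ω | V ω ≤ x}).toReal = edwCDF α p β x) (a : ℕ) :
    μ.real {ω | V ω < a} = edwCDFLt α p β a := by
  cases a with
  | zero => simp [edwCDFLt_zero hα hβ]
  | succ x => simp only [Nat.lt_succ_iff, measureReal_def, hcdf, edwCDF_eq_edwCDFLt_add_one]

end EDW

def rectDiff {G : Type*} [AddCommGroup G] (H : ℕ → ℕ → G) (a b : ℕ) : G :=
  H (a + 1) (b + 1) - H a (b + 1) - H (a + 1) b + H a b

section InclusionExclusion

variable {β : Type*} [MeasurableSpace β]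

theorem measureReal_Iio_add_one_prod (ν : Measure (ℕ × β)) [IsFiniteMeasure ν] {t : Set β}
    (ht : MeasurableSet t) (a : ℕ) :
    ν.real (Iio (a + 1) ×ˢ t) = ν.real (Iio a ×ˢ t) + ν.real ({a} ×ˢ t) := by
  rw [show Iio (a + 1) = Iio a ∪ {a} by ext; simp, union_prod]
  exact measureReal_union (Disjoint.set_prod_left (by simp) _ _)
    ((measurableSet_singleton a).prod ht)

theorem measureReal_prod_Iio_add_one (ν : Measure (β × ℕ)) [IsFiniteMeasure ν] {s : Set β}
    (hs : MeasurableSet s) (b : ℕ) :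
    ν.real (s ×ˢ Iio (b + 1)) = ν.real (s ×ˢ Iio b) + ν.real (s ×ˢ {b}) := by
  rw [show Iio (b + 1) = Iio b ∪ {b} by ext; simp, prod_union]
  exact measureReal_union (Disjoint.set_prod_right (by simp) _ _)
    (hs.prod (measurableSet_singleton b))

end InclusionExclusion

theorem measureReal_singleton_eq_rectDiff (ν : Measure (ℕ × ℕ)) [IsFiniteMeasure ν] (a b : ℕ) :
    ν.real {(a, b)} = rectDiff (fun a b => ν.real (Iio a ×ˢ Iio b)) a b := by
  have h₁ := measureReal_Iio_add_one_prod ν (t := Iio (b + 1)) measurableSet_Iio a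
  have h₂ := measureReal_Iio_add_one_prod ν (t := Iio b) measurableSet_Iio a
  have h₃ := measureReal_prod_Iio_add_one ν (measurableSet_singleton a) b
  rw [singleton_prod_singleton] at h₃
  simp only [rectDiff]
  linarith

theorem measure_max_lt_and_max_lt {Ω E : Type*} [MeasurableSpace Ω] {μ : Measure Ω}
    [LinearOrder E] [TopologicalSpace E] [OrderClosedTopology E] [MeasurableSpace E]
    [OpensMeasurableSpace E] {V₁ V₂ V₃ : Ω → E} (hindep : iIndepFun ![V₁, V₂, V₃] μ) (a b : E) :
    μ {ω | max (V₁ ω) (V₃ ω) < a ∧ max (V₂ ω) (V₃ ω) < b} =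
      μ {ω | V₁ ω < a} * μ {ω | V₂ ω < b} * μ {ω | V₃ ω < min a b} := by
  have hset : {ω | max (V₁ ω) (V₃ ω) < a ∧ max (V₂ ω) (V₃ ω) < b} =
      ⋂ i ∈ (Finset.univ : Finset (Fin 3)),
        ![V₁, V₂, V₃] i ⁻¹' ![Iio a, Iio b, Iio (min a b)] i := by
    ext ω
    simp [Fin.forall_fin_succ, and_assoc, and_left_comm]
  rw [hset, hindep.measure_inter_preimage_eq_mul _
    fun i _ => by fin_cases i <;> exact measurableSet_Iio, Fin.prod_univ_three]
  rfl

section BDEW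

variable {α p β₁ β₂ β₃ : ℝ}

noncomputable def bdewCDFLt (α p β₁ β₂ β₃ : ℝ) (a b : ℕ) : ℝ :=
  edwCDFLt α p β₁ a * edwCDFLt α p β₂ b * edwCDFLt α p β₃ (min a b)

theorem map_max_measureReal_singleton {Ω : Type*} [MeasurableSpace Ω] {μ : Measure Ω}
    [IsFiniteMeasure μ] (hα : α ≠ 0) (hβ₁ : β₁ ≠ 0) (hβ₂ : β₂ ≠ 0) (hβ₃ : β₃ ≠ 0)
    {V₁ V₂ V₃ : Ω → ℕ} (hm₁ : Measurable V₁) (hm₂ : Measurable V₂) (hm₃ : Measurable V₃)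
    (hindep : iIndepFun ![V₁, V₂, V₃] μ)
    (hcdf₁ : ∀ x : ℕ, (μ {ω | V₁ ω ≤ x}).toReal = edwCDF α p β₁ x)
    (hcdf₂ : ∀ x : ℕ, (μ {ω | V₂ ω ≤ x}).toReal = edwCDF α p β₂ x)
    (hcdf₃ : ∀ x : ℕ, (μ {ω | V₃ ω ≤ x}).toReal = edwCDF α p β₃ x) (a b : ℕ) :
    (μ.map fun ω => (max (V₁ ω) (V₃ ω), max (V₂ ω) (V₃ ω))).real {(a, b)} =
      rectDiff (bdewCDFLt α p β₁ β₂ β₃) a b := by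
  rw [measureReal_singleton_eq_rectDiff]
  congr 1
  ext a b
  rw [map_measureReal_apply ((hm₁.max hm₃).prodMk (hm₂.max hm₃))
    (measurableSet_Iio.prod measurableSet_Iio)]
  simp only [bdewCDFLt, preimage, mem_prod, mem_Iio, measureReal_def,
    measure_max_lt_and_max_lt hindep, ENNReal.toReal_mul]
  simp only [← measureReal_def, measureReal_lt_eq_edwCDFLt hα hβ₁ hcdf₁,
    measureReal_lt_eq_edwCDFLt hα hβ₂ hcdf₂, measureReal_lt_eq_edwCDFLt hα hβ₃ hcdf₃]

variable (hp0 : 0 ≤ p) (hp1 : p ≤ 1)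
include hp0 hp1

theorem rectDiff_bdewCDFLt_of_lt (hβ₁₃ : β₁ + β₃ ≠ 0) {a b : ℕ} (hab : a < b) :
    rectDiff (bdewCDFLt α p β₁ β₂ β₃) a b = edwPMF α p (β₁ + β₃) a * edwPMF α p β₂ b := by
  rw [rectDiff, bdewCDFLt, bdewCDFLt, bdewCDFLt, bdewCDFLt,
    min_eq_left (by omega : a + 1 ≤ b + 1), min_eq_left (by omega : a ≤ b + 1),
    min_eq_left (by omega : a + 1 ≤ b), min_eq_left hab.le, edwPMF_eq_sub, edwPMF_eq_sub,
    edwCDFLt_add hp0 hp1 hβ₁₃, edwCDFLt_add hp0 hp1 hβ₁₃]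
  ring

theorem rectDiff_bdewCDFLt_of_gt (hβ₂₃ : β₂ + β₃ ≠ 0) {a b : ℕ} (hba : b < a) :
    rectDiff (bdewCDFLt α p β₁ β₂ β₃) a b = edwPMF α p β₁ a * edwPMF α p (β₂ + β₃) b := by
  rw [rectDiff, bdewCDFLt, bdewCDFLt, bdewCDFLt, bdewCDFLt,
    min_eq_right (by omega : b + 1 ≤ a + 1), min_eq_right (by omega : b + 1 ≤ a),
    min_eq_right (by omega : b ≤ a + 1), min_eq_right hba.le, edwPMF_eq_sub, edwPMF_eq_sub,
    edwCDFLt_add hp0 hp1 hβ₂₃, edwCDFLt_add hp0 hp1 hβ₂₃]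
  ring

theorem rectDiff_bdewCDFLt_self (hβ₁₃ : β₁ + β₃ ≠ 0) (hβ₂₃ : β₂ + β₃ ≠ 0) (a : ℕ) :
    rectDiff (bdewCDFLt α p β₁ β₂ β₃) a a =
      edwCDF α p β₁ a * edwPMF α p (β₂ + β₃) a -
        edwCDFLt α p (β₁ + β₃) a * edwPMF α p β₂ a := by
  rw [rectDiff, bdewCDFLt, bdewCDFLt, bdewCDFLt, bdewCDFLt, min_self,
    min_eq_left (Nat.le_succ a), min_eq_right (Nat.le_succ a), min_self,
    edwCDF_eq_edwCDFLt_add_one, edwPMF_eq_sub, edwPMF_eq_sub,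
    edwCDFLt_add hp0 hp1 hβ₁₃, edwCDFLt_add hp0 hp1 hβ₂₃, edwCDFLt_add hp0 hp1 hβ₂₃]
  ring

end BDEW

theorem summable_measureReal_singleton_mul {X : Type*} [MeasurableSpace X]
    [MeasurableSingletonClass X] (ν : Measure X) [IsFiniteMeasure ν] {g : X → ℝ} {C : ℝ}
    (hg : ∀ x, ‖g x‖ ≤ C) : Summable fun x => ν.real {x} * g x := by
  have hν : Summable fun x => ν.real {x} :=
    ENNReal.summable_toReal <| ne_top_of_le_ne_top (measure_ne_top ν univ) <|
      tsum_measure_le_measure_univ (fun x => (measurableSet_singleton x).nullMeasurableSet)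
        fun x y hxy => (disjoint_singleton.2 hxy).aedisjoint
  refine (hν.mul_right C).of_norm_bounded fun x => ?_
  rw [norm_mul, Real.norm_of_nonneg measureReal_nonneg]
  exact mul_le_mul_of_nonneg_left (hg x) measureReal_nonneg

theorem integral_comp_eq_tsum_measureReal_singleton_mul {Ω X : Type*} [MeasurableSpace Ω]
    {μ : Measure Ω} [IsFiniteMeasure μ] [MeasurableSpace X] [Countable X]
    [MeasurableSingletonClass X] {Y : Ω → X} (hY : Measurable Y) {g : X → ℝ} {C : ℝ}
    (hg : ∀ x, ‖g x‖ ≤ C) :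
    ∫ ω, g (Y ω) ∂μ = ∑' x, (μ.map Y).real {x} * g x := by
  have hgm : AEStronglyMeasurable g (μ.map Y) := (measurable_of_countable g).aestronglyMeasurable
  rw [← integral_map hY.aemeasurable hgm,
    integral_countable (Integrable.of_bound hgm C (ae_of_all _ hg))]
  rfl

theorem tsum_prod_eq_tsum_lt_add_tsum_gt_add_tsum_diag {ι E : Type*} [LinearOrder ι]
    [NormedAddCommGroup E] [CompleteSpace E] {f : ι × ι → E} (hf : Summable f) :
    ∑' y, f y = (∑' i, ∑' j, if i < j then f (i, j) else 0) +
      (∑' j, ∑' i, if j < i then f (i, j) else 0) + ∑' i, f (i, i) := by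
  set L := {y : ι × ι | y.1 < y.2}
  set G := {y : ι × ι | y.2 < y.1}
  set D := {y : ι × ι | y.1 = y.2}
  have hsplit : f = L.indicator f + G.indicator f + D.indicator f := by
    ext ⟨i, j⟩
    rcases lt_trichotomy i j with h | rfl | h
    · simp [L, G, D, indicator, h, h.not_gt, h.ne]
    · simp [L, G, D, indicator]
    · simp [L, G, D, indicator, h, h.not_gt, h.ne']
  have hL : ∑' y, L.indicator f y = ∑' i, ∑' j, if i < j then f (i, j) else 0 := by
    rw [(hf.indicator L).tsum_prod]
    simp only [L, indicator_apply, mem_ofPred_eq]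
  have hG : ∑' y, G.indicator f y = ∑' j, ∑' i, if j < i then f (i, j) else 0 := by
    have hG' : Summable (Function.uncurry fun i j => G.indicator f (i, j)) := hf.indicator G
    rw [(hf.indicator G).tsum_prod, ← hG'.tsum_comm]
    simp only [G, indicator_apply, mem_ofPred_eq]
  have hD : ∑' y, D.indicator f y = ∑' i, f (i, i) := by
    rw [(hf.indicator D).tsum_prod]
    refine tsum_congr fun i => (tsum_eq_single i fun j hj => ?_).trans ?_
    · simp [D, Ne.symm hj]
    · simp [D]
  conv_lhs => rw [hsplit]
  rw [Pi.add_def, Pi.add_def, ((hf.indicator L).add (hf.indicator G)).tsum_add (hf.indicator D),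
    (hf.indicator L).tsum_add (hf.indicator G), hL, hG, hD]

/-- Theorem 1: the joint probability generating function of the BDEW distribution. -/
theorem bdew_pgf
    {Ω : Type*} [MeasurableSpace Ω] (μ : Measure Ω) [IsProbabilityMeasure μ]
    (α p β₁ β₂ β₃ : ℝ)
    (hp0 : 0 < p) (hp1 : p < 1) (hα : 0 < α)
    (hβ₁ : 0 < β₁) (hβ₂ : 0 < β₂) (hβ₃ : 0 < β₃)
    (V₁ V₂ V₃ : Ω → ℕ)
    (hm₁ : Measurable V₁) (hm₂ : Measurable V₂) (hm₃ : Measurable V₃)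
    (hindep : iIndepFun ![V₁, V₂, V₃] μ)
    (hcdf₁ : ∀ x : ℕ, (μ {ω | V₁ ω ≤ x}).toReal = edwCDF α p β₁ x)
    (hcdf₂ : ∀ x : ℕ, (μ {ω | V₂ ω ≤ x}).toReal = edwCDF α p β₂ x)
    (hcdf₃ : ∀ x : ℕ, (μ {ω | V₃ ω ≤ x}).toReal = edwCDF α p β₃ x)
    (u v : ℝ) (hu0 : 0 ≤ u) (hu1 : u < 1) (hv0 : 0 ≤ v) (hv1 : v < 1) :
    (∫ ω, u ^ (max (V₁ ω) (V₃ ω)) * v ^ (max (V₂ ω) (V₃ ω)) ∂μ) =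
      (∑' i : ℕ, ∑' j : ℕ,
        if i < j then edwPMF α p (β₁ + β₃) i * edwPMF α p β₂ j * u ^ i * v ^ j else 0) +
      (∑' j : ℕ, ∑' i : ℕ,
        if j < i then edwPMF α p β₁ i * edwPMF α p (β₂ + β₃) j * u ^ i * v ^ j else 0) +
      (∑' i : ℕ,
        ((1 - p ^ (((i : ℝ) + 1) ^ α)) ^ β₁ * edwPMF α p (β₂ + β₃) i -
          (1 - p ^ ((i : ℝ) ^ α)) ^ (β₁ + β₃) * edwPMF α p β₂ i) * u ^ i * v ^ i) := by
  have hβ₁₃ : β₁ + β₃ ≠ 0 := by positivity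
  have hβ₂₃ : β₂ + β₃ ≠ 0 := by positivity
  have hmass := map_max_measureReal_singleton (μ := μ) hα.ne' hβ₁.ne' hβ₂.ne' hβ₃.ne'
    hm₁ hm₂ hm₃ hindep hcdf₁ hcdf₂ hcdf₃
  have hg : ∀ y : ℕ × ℕ, ‖u ^ y.1 * v ^ y.2‖ ≤ 1 := fun y => by
    rw [norm_mul, norm_pow, norm_pow, Real.norm_of_nonneg hu0, Real.norm_of_nonneg hv0]
    exact mul_le_one₀ (pow_le_one₀ hu0 hu1.le) (by positivity) (pow_le_one₀ hv0 hv1.le)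
  refine (integral_comp_eq_tsum_measureReal_singleton_mul
    ((hm₁.max hm₃).prodMk (hm₂.max hm₃)) hg).trans ?_
  rw [tsum_prod_eq_tsum_lt_add_tsum_gt_add_tsum_diag (summable_measureReal_singleton_mul _ hg)]
  congr 1
  congr 1
  · refine tsum_congr fun i => tsum_congr fun j => ?_
    split_ifs with h
    · rw [hmass, rectDiff_bdewCDFLt_of_lt hp0.le hp1.le hβ₁₃ h]; ring
    · rfl
  · refine tsum_congr fun j => tsum_congr fun i => ?_
    split_ifs with h
    · rw [hmass, rectDiff_bdewCDFLt_of_gt hp0.le hp1.le hβ₂₃ h]; ring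
    · rfl
  · refine tsum_congr fun i => ?_
    rw [hmass, rectDiff_bdewCDFLt_self hp0.le hp1.le hβ₁₃ hβ₂₃, edwCDF, edwCDFLt]
    ring
end

section
/- Let 0 < p < 1 and α, β₁, β₂, β₃ > 0. Let V₁, V₂, V₃ be independent ℕ-valued random variables with P(Vᵢ ≤ x) = (1 − p^{(x+1)^α})^{βᵢ} for all x ∈ ℕ, and set X₁ = max{V₁, V₃}, X₂ = max{V₂, V₃}. Then X₁ and X₂ are positively quadrant dependent: for all x₁, x₂ ∈ ℕ, P(X₁ ≤ x₁, X₂ ≤ x₂) ≥ P(X₁ ≤ x₁) · P(X₂ ≤ x₂). -/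
open MeasureTheory ProbabilityTheory

namespace ProbabilityTheory

variable {Ω β : Type*} [MeasurableSpace Ω] {μ : Measure Ω}

def PositivelyQuadrantDependent [LE β] (X Y : Ω → β) (μ : Measure Ω) : Prop :=
  ∀ x y, μ {ω | X ω ≤ x} * μ {ω | Y ω ≤ y} ≤ μ {ω | X ω ≤ x ∧ Y ω ≤ y}

theorem mul_measure_le_le_measure_le_min [IsProbabilityMeasure μ] [LinearOrder β]
    (V : Ω → β) (a b : β) :
    μ {ω | V ω ≤ a} * μ {ω | V ω ≤ b} ≤ μ {ω | V ω ≤ min a b} := by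
  rcases le_total a b with hab | hba
  · rw [min_eq_left hab]
    exact mul_le_of_le_one_right' prob_le_one
  · rw [min_eq_right hba]
    exact mul_le_of_le_one_left' prob_le_one

section Independence

variable [LinearOrder β] [TopologicalSpace β] [OrderClosedTopology β] [MeasurableSpace β]
  [OpensMeasurableSpace β]

theorem IndepFun.measure_le_and_le {X Y : Ω → β} (h : IndepFun X Y μ) (a b : β) :
    μ {ω | X ω ≤ a ∧ Y ω ≤ b} = μ {ω | X ω ≤ a} * μ {ω | Y ω ≤ b} :=
  h.measure_inter_preimage_eq_mul (Set.Iic a) (Set.Iic b) measurableSet_Iic measurableSet_Iic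

theorem iIndepFun.measure_le_and_le_and_le {X Y Z : Ω → β} (h : iIndepFun ![X, Y, Z] μ)
    (a b c : β) :
    μ {ω | X ω ≤ a ∧ Y ω ≤ b ∧ Z ω ≤ c} =
      μ {ω | X ω ≤ a} * μ {ω | Y ω ≤ b} * μ {ω | Z ω ≤ c} := by
  have := h.measure_inter_preimage_eq_mul Finset.univ (sets := ![Set.Iic a, Set.Iic b, Set.Iic c])
    (fun i _ => by fin_cases i <;> exact measurableSet_Iic)
  rw [Fin.prod_univ_three] at this
  refine Eq.trans ?_ this
  congr 1
  ext ω
  simp [Fin.forall_fin_succ]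

theorem iIndepFun.positivelyQuadrantDependent_max {V₁ V₂ V₃ : Ω → β} [IsProbabilityMeasure μ]
    (h : iIndepFun ![V₁, V₂, V₃] μ) :
    PositivelyQuadrantDependent (fun ω => max (V₁ ω) (V₃ ω)) (fun ω => max (V₂ ω) (V₃ ω)) μ := by
  intro x₁ x₂
  have h₁₃ : IndepFun V₁ V₃ μ := h.indepFun (i := 0) (j := 2) (by decide)
  have h₂₃ : IndepFun V₂ V₃ μ := h.indepFun (i := 1) (j := 2) (by decide)
  simp only [max_le_iff]
  calc μ {ω | V₁ ω ≤ x₁ ∧ V₃ ω ≤ x₁} * μ {ω | V₂ ω ≤ x₂ ∧ V₃ ω ≤ x₂}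
      = μ {ω | V₁ ω ≤ x₁} * μ {ω | V₂ ω ≤ x₂} * (μ {ω | V₃ ω ≤ x₁} * μ {ω | V₃ ω ≤ x₂}) := by
        rw [h₁₃.measure_le_and_le, h₂₃.measure_le_and_le]; ring
    _ ≤ μ {ω | V₁ ω ≤ x₁} * μ {ω | V₂ ω ≤ x₂} * μ {ω | V₃ ω ≤ min x₁ x₂} := by
        gcongr; exact mul_measure_le_le_measure_le_min V₃ x₁ x₂
    _ = μ {ω | (V₁ ω ≤ x₁ ∧ V₃ ω ≤ x₁) ∧ V₂ ω ≤ x₂ ∧ V₃ ω ≤ x₂} := by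
        rw [← h.measure_le_and_le_and_le]
        congr 1; ext ω; simp only [Set.mem_ofPred_eq, le_min_iff]; tauto

end Independence

end ProbabilityTheory

theorem bdew_pqd_general
    {Ω : Type*} [MeasurableSpace Ω] (μ : Measure Ω) [IsProbabilityMeasure μ]
    (V₁ V₂ V₃ : Ω → ℕ)
    (hindep : iIndepFun ![V₁, V₂, V₃] μ) :
    ∀ x₁ x₂ : ℕ,
      (μ {ω | max (V₁ ω) (V₃ ω) ≤ x₁ ∧ max (V₂ ω) (V₃ ω) ≤ x₂}).toReal ≥
        (μ {ω | max (V₁ ω) (V₃ ω) ≤ x₁}).toReal * (μ {ω | max (V₂ ω) (V₃ ω) ≤ x₂}).toReal := by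
  intro x₁ x₂
  rw [ge_iff_le, ← ENNReal.toReal_mul]
  exact ENNReal.toReal_mono (measure_ne_top μ _) (hindep.positivelyQuadrantDependent_max x₁ x₂)

/-- Result 3: `X₁` and `X₂` are positively quadrant dependent. -/
theorem bdew_pqd
    {Ω : Type*} [MeasurableSpace Ω] (μ : Measure Ω) [IsProbabilityMeasure μ]
    (α p β₁ β₂ β₃ : ℝ)
    (hp0 : 0 < p) (hp1 : p < 1) (hα : 0 < α)
    (hβ₁ : 0 < β₁) (hβ₂ : 0 < β₂) (hβ₃ : 0 < β₃)
    (V₁ V₂ V₃ : Ω → ℕ)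
    (hm₁ : Measurable V₁) (hm₂ : Measurable V₂) (hm₃ : Measurable V₃)
    (hindep : iIndepFun ![V₁, V₂, V₃] μ)
    (hcdf₁ : ∀ x : ℕ, (μ {ω | V₁ ω ≤ x}).toReal = edwCDF α p β₁ x)
    (hcdf₂ : ∀ x : ℕ, (μ {ω | V₂ ω ≤ x}).toReal = edwCDF α p β₂ x)
    (hcdf₃ : ∀ x : ℕ, (μ {ω | V₃ ω ≤ x}).toReal = edwCDF α p β₃ x) :
    ∀ x₁ x₂ : ℕ,
      (μ {ω | max (V₁ ω) (V₃ ω) ≤ x₁ ∧ max (V₂ ω) (V₃ ω) ≤ x₂}).toReal ≥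
        (μ {ω | max (V₁ ω) (V₃ ω) ≤ x₁}).toReal * (μ {ω | max (V₂ ω) (V₃ ω) ≤ x₂}).toReal :=
  bdew_pqd_general μ V₁ V₂ V₃ hindep
end

section
/- Let 0 < p < 1, α > 0, n ≥ 1, and βⱼ₁, βⱼ₂, βⱼ₃ > 0 for j = 1, …, n. Suppose the pairs (X_{j1}, X_{j2}), j = 1, …, n, are independent, and each (X_{j1}, X_{j2}) has the BDEW(α, p, βⱼ₁, βⱼ₂, βⱼ₃) joint distribution, i.e. P(X_{j1} ≤ x₁, X_{j2} ≤ x₂) = (1 − p^{(x₁+1)^α})^{βⱼ₁}(1 − p^{(x₂+1)^α})^{βⱼ₂}(1 − p^{(min{x₁,x₂}+1)^α})^{βⱼ₃} for all x₁, x₂ ∈ ℕ. Then Z₁ = max{X_{11}, …, X_{n1}} and Z₂ = max{X_{12}, …, X_{n2}} satisfy, for all x₁, x₂ ∈ ℕ, P(Z₁ ≤ x₁, Z₂ ≤ x₂) = (1 − p^{(x₁+1)^α})^{Σⱼ βⱼ₁}(1 − p^{(x₂+1)^α})^{Σⱼ βⱼ₂}(1 − p^{(min{x₁,x₂}+1)^α})^{Σⱼ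 βⱼ₃}; that is, (Z₁, Z₂) has the BDEW(α, p, Σⱼ βⱼ₁, Σⱼ βⱼ₂, Σⱼ βⱼ₃) distribution. -/
/-! The maximum of independent random variables is below `x` exactly when each of them is, so
its CDF is the product of theirs; and a product of EDW CDFs with common `α, p` is the EDW CDF
with the summed shape parameter. Applied in the product order on `ℕ × ℕ`, this gives the claim. -/

open MeasureTheory ProbabilityTheory

theorem ProbabilityTheory.iIndepFun.measure_sup_le_eq_prod {Ω ι α : Type*} [MeasurableSpace Ω]
    {μ : Measure Ω} [Fintype ι] [SemilatticeSup α] [OrderBot α] [MeasurableSpace α]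
    {X : ι → Ω → α} (hX : iIndepFun X μ) {x : α} (hx : MeasurableSet (Set.Iic x)) :
    μ {ω | Finset.univ.sup (fun j => X j ω) ≤ x} = ∏ j, μ (X j ⁻¹' Set.Iic x) := by
  have hevent : {ω | Finset.univ.sup (fun j => X j ω) ≤ x} = ⋂ j, X j ⁻¹' Set.Iic x := by
    ext ω
    simp
  rw [hevent]
  exact hX.meas_iInter fun j => ⟨_, hx, rfl⟩

theorem prod_edwCDF {ι : Type*} (s : Finset ι) {α p : ℝ} (hp0 : 0 ≤ p) (hp1 : p < 1)
    (b : ι → ℝ) (x : ℕ) :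
    ∏ j ∈ s, edwCDF α p (b j) x = edwCDF α p (∑ j ∈ s, b j) x := by
  have hbase : 0 < 1 - p ^ (((x : ℝ) + 1) ^ α) := by
    have : p ^ (((x : ℝ) + 1) ^ α) < 1 := Real.rpow_lt_one hp0 hp1 (by positivity)
    linarith
  exact (Real.rpow_sum_of_pos hbase _ _).symm

theorem bdew_max_closure_general
    {Ω : Type*} [MeasurableSpace Ω] (μ : Measure Ω)
    (n : ℕ) (α p : ℝ) (hp0 : 0 < p) (hp1 : p < 1)
    (b₁ b₂ b₃ : Fin n → ℝ)
    (W : Fin n → Ω → ℕ × ℕ)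
    (hindep : iIndepFun W μ)
    (hjoint : ∀ j, ∀ x₁ x₂ : ℕ,
      (μ {ω | (W j ω).1 ≤ x₁ ∧ (W j ω).2 ≤ x₂}).toReal =
        edwCDF α p (b₁ j) x₁ * edwCDF α p (b₂ j) x₂ * edwCDF α p (b₃ j) (min x₁ x₂)) :
    ∀ x₁ x₂ : ℕ,
      (μ {ω | (Finset.univ.sup fun j => (W j ω).1) ≤ x₁ ∧
            (Finset.univ.sup fun j => (W j ω).2) ≤ x₂}).toReal =
        edwCDF α p (∑ j, b₁ j) x₁ * edwCDF α p (∑ j, b₂ j) x₂ *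
          edwCDF α p (∑ j, b₃ j) (min x₁ x₂) := by
  intro x₁ x₂
  have hevent : {ω | (Finset.univ.sup fun j => (W j ω).1) ≤ x₁ ∧
      (Finset.univ.sup fun j => (W j ω).2) ≤ x₂} =
      {ω | Finset.univ.sup (fun j => W j ω) ≤ (x₁, x₂)} := by
    ext ω
    simp [Prod.le_def, forall_and]
  have hmarginal (j : Fin n) : (μ (W j ⁻¹' Set.Iic (x₁, x₂))).toReal =
      edwCDF α p (b₁ j) x₁ * edwCDF α p (b₂ j) x₂ * edwCDF α p (b₃ j) (min x₁ x₂) :=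
    hjoint j x₁ x₂
  rw [hevent, hindep.measure_sup_le_eq_prod .of_discrete, ENNReal.toReal_prod,
    Finset.prod_congr rfl fun j _ => hmarginal j, Finset.prod_mul_distrib,
    Finset.prod_mul_distrib, prod_edwCDF _ hp0.le hp1, prod_edwCDF _ hp0.le hp1,
    prod_edwCDF _ hp0.le hp1]

/-- Result 4: componentwise maxima of independent BDEW pairs are again BDEW,
with parameters the sums of the original ones. -/
theorem bdew_max_closure
    {Ω : Type*} [MeasurableSpace Ω] (μ : Measure Ω) [IsProbabilityMeasure μ]
    (n : ℕ) (hn : 1 ≤ n) (α p : ℝ) (hp0 : 0 < p) (hp1 : p < 1) (hα : 0 < α)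
    (b₁ b₂ b₃ : Fin n → ℝ)
    (hb₁ : ∀ j, 0 < b₁ j) (hb₂ : ∀ j, 0 < b₂ j) (hb₃ : ∀ j, 0 < b₃ j)
    (W : Fin n → Ω → ℕ × ℕ) (hWm : ∀ j, Measurable (W j))
    (hindep : iIndepFun W μ)
    (hjoint : ∀ j, ∀ x₁ x₂ : ℕ,
      (μ {ω | (W j ω).1 ≤ x₁ ∧ (W j ω).2 ≤ x₂}).toReal =
        edwCDF α p (b₁ j) x₁ * edwCDF α p (b₂ j) x₂ * edwCDF α p (b₃ j) (min x₁ x₂)) :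
    ∀ x₁ x₂ : ℕ,
      (μ {ω | (Finset.univ.sup fun j => (W j ω).1) ≤ x₁ ∧
            (Finset.univ.sup fun j => (W j ω).2) ≤ x₂}).toReal =
        edwCDF α p (∑ j, b₁ j) x₁ * edwCDF α p (∑ j, b₂ j) x₂ *
          edwCDF α p (∑ j, b₃ j) (min x₁ x₂) :=
  bdew_max_closure_general μ n α p hp0 hp1 b₁ b₂ b₃ W hindep hjoint
end
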